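/- arXiv:1602.04919 — 2 statements merged into one kernel-verified Lean document; each statement's English description precedes it below -/
import Mathlib

section
/- Let F be the free Lie ring over ℤ on generators X_1, …, X_m, let e_1, …, e_m be nonnegative integers with e_i dividing e_{i+1} for 1 ≤ i ≤ m−1, let F' = [F,F], let S be the Lie ideal F' + T of F, where T is the Lie ideal of F generated by {e_i·X_i : 1 ≤ i ≤ m}, let 𝔰 be the two-sided ideal of U(F) generated by ι(S), and let M = {x ∈ F : ι(x) ∈ ϖ(F)·𝔰}. Then for all n ≥ 1, the set {x ∈ F : ι(x) ∈ ϖ(F)^n + ϖ(F)·𝔰} equals γ_n(F) + M, where γ_n(F) is the n-th term of the lower central series of F. -/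
open UniversalEnvelopingAlgebra LieModule

attribute [local instance 100] LieRing.ofAssociativeRing

/-- The two-sided ideal (as a ℤ-submodule) of a ring `U` generated by a set `s`. -/
def twoSidedSpan (U : Type*) [Ring U] (s : Set U) : Submodule ℤ U :=
  ⊤ * Submodule.span ℤ s * ⊤

/-- The augmentation ideal `ϖ(L)` of the universal enveloping algebra of a Lie ring `L`,
i.e. the two-sided ideal of `𝒰(L)` generated by the image of the canonical map `ι : L → 𝒰(L)`. -/
noncomputable def aug (L : Type*) [LieRing L] [LieAlgebra ℤ L] :
    Submodule ℤ (UniversalEnvelopingAlgebra ℤ L) :=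
  twoSidedSpan _ (Set.range (ι ℤ : L →ₗ⁅ℤ⁆ UniversalEnvelopingAlgebra ℤ L))

/-- The free Lie ring `F` on `m` generators. -/
abbrev FreeF (m : ℕ) := FreeLieAlgebra ℤ (Fin m)

/-- The generators `X_1, …, X_m` of the free Lie ring `F`. -/
noncomputable def Xgen (m : ℕ) (i : Fin m) : FreeF m := FreeLieAlgebra.of ℤ i

/-- The derived subring `F´ = [F, F]`. -/
noncomputable def derived (m : ℕ) : LieIdeal ℤ (FreeF m) :=
  ⁅(⊤ : LieIdeal ℤ (FreeF m)), (⊤ : LieIdeal ℤ (FreeF m))⁆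

/-- The Lie ideal `T` of `F` generated by the elements `e_i • X_i`. -/
noncomputable def Tideal (m : ℕ) (e : Fin m → ℕ) : LieIdeal ℤ (FreeF m) :=
  LieSubmodule.lieSpan ℤ (FreeF m) {x | ∃ i : Fin m, x = (e i : ℤ) • Xgen m i}

/-- The Lie ideal `S = F´ + T` of `F`. -/
noncomputable def Sideal (m : ℕ) (e : Fin m → ℕ) : LieIdeal ℤ (FreeF m) :=
  derived m ⊔ Tideal m e

/-- The two-sided ideal `𝔰` of `𝒰(F)` generated by `ι(S)`. -/
noncomputable def sId (m : ℕ) (e : Fin m → ℕ) :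
    Submodule ℤ (UniversalEnvelopingAlgebra ℤ (FreeF m)) :=
  twoSidedSpan _ ((ι ℤ : FreeF m →ₗ⁅ℤ⁆ _) '' (Sideal m e : Set (FreeF m)))

/-- `M = {x ∈ F : ι x ∈ ϖ(F)·𝔰}`, as a ℤ-submodule of `F`. -/
noncomputable def Msub (m : ℕ) (e : Fin m → ℕ) : Submodule ℤ (FreeF m) :=
  (aug (FreeF m) * sId m e).comap (ι ℤ : FreeF m →ₗ⁅ℤ⁆ _).toLinearMap

/-!
Grade `U(F)` by word length: the algebra map `γ : U(F) → U(F)[t]` with `ι(X_i) ↦ ι(X_i) t` sends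
`ι x` to a polynomial whose degree-`d` coefficient lies in `ι(γ_d(F))`, and `γ u` evaluated at
`t = 1` is `u`. It sends `ϖ^n` into `t^n U(F)[t]`, and since `S ⊇ F'` the ideal `ϖ·𝔰` contains
all coefficients of `γ v` for `v ∈ ϖ·𝔰`. So if `ι x = w + v` with `w ∈ ϖ^n` and `v ∈ ϖ·𝔰`, the
coefficients of `γ(ι x)` in degree `< n` are those of `γ v`, hence lie in `ι(M)`, and those in
degree `≥ n` lie in `ι(γ_n(F))`. Their sum is `ι x`, so `x ∈ γ_n(F) + M + ker ι = γ_n(F) + M`.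
The reverse inclusion is `ι(γ_n(F)) ⊆ ϖ^n`.
-/

open Polynomial

open LieSubmodule in
theorem LieIdeal.lie_lie_le {R L : Type*} [CommRing R] [LieRing L] [LieAlgebra R L]
    (I J K : LieIdeal R L) : ⁅⁅I, J⁆, K⁆ ≤ ⁅I, ⁅J, K⁆⁆ ⊔ ⁅J, ⁅I, K⁆⁆ := by
  rw [lie_le_iff]
  intro z hz k hk
  rw [← mem_toSubmodule, lieIdeal_oper_eq_linear_span'] at hz
  induction hz using Submodule.span_induction with
  | mem _ h =>
    obtain ⟨a, ha, b, hb, rfl⟩ := h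
    rw [lie_lie]
    exact sub_mem (mem_sup_left (lie_mem_lie ha (lie_mem_lie hb hk)))
      (mem_sup_right (lie_mem_lie hb (lie_mem_lie ha hk)))
  | zero => simp
  | add _ _ _ _ hx hy => rw [add_lie]; exact add_mem hx hy
  | smul t _ _ hx => rw [smul_lie]; exact SMulMemClass.smul_mem t hx

namespace LieModule
variable {R L : Type*} [CommRing R] [LieRing L] [LieAlgebra R L]

theorem lie_lowerCentralSeries_le (i j : ℕ) :
    ⁅lowerCentralSeries R L L i, lowerCentralSeries R L L j⁆ ≤
      lowerCentralSeries R L L (i + j + 1) := by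
  induction i generalizing j with
  | zero => rw [zero_add, lowerCentralSeries_succ]; rfl
  | succ i ih =>
    rw [lowerCentralSeries_succ]
    refine (LieIdeal.lie_lie_le _ _ _).trans (sup_le ?_ ?_)
    · rw [show i + 1 + j + 1 = i + j + 1 + 1 by ring, lowerCentralSeries_succ]
      exact LieSubmodule.mono_lie_right _ (ih j)
    · rw [← lowerCentralSeries_succ, show i + 1 + j + 1 = i + (j + 1) + 1 by ring]
      exact ih (j + 1)

end LieModule

theorem LieModule.map_lowerCentralSeries_le_pow {L A : Type*} [LieRing L] [Ring A]
    (f : L →ₗ⁅ℤ⁆ A) {P : Submodule ℤ A} (hf : ∀ x, f x ∈ P) {k : ℕ} {x : L}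
    (hx : x ∈ lowerCentralSeries ℤ L L k) : f x ∈ P ^ (k + 1) := by
  induction k generalizing x with
  | zero => exact (pow_one P).symm ▸ hf x
  | succ k ih =>
    rw [lowerCentralSeries_succ, ← LieSubmodule.mem_toSubmodule,
      LieSubmodule.lieIdeal_oper_eq_linear_span'] at hx
    induction hx using Submodule.span_induction with
    | mem _ h =>
      obtain ⟨a, -, b, hb, rfl⟩ := h
      have hab : f a * f b ∈ P ^ (k + 2) :=
        pow_succ' P (k + 1) ▸ Submodule.mul_mem_mul (hf a) (ih hb)
      have hba : f b * f a ∈ P ^ (k + 2) :=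
        pow_succ P (k + 1) ▸ Submodule.mul_mem_mul (ih hb) (hf a)
      rw [LieHom.map_lie, Ring.lie_def]
      exact sub_mem hab hba
    | zero => simp
    | add _ _ _ _ hx hy => rw [map_add]; exact add_mem hx hy
    | smul t _ _ hx => rw [map_zsmul]; exact Submodule.smul_mem _ t hx

theorem FreeLieAlgebra.lift_mem {R α L : Type*} [CommRing R] [LieRing L] [LieAlgebra R L]
    {K : LieSubalgebra R L} {f : α → L} (hf : ∀ i, f i ∈ K) (x : FreeLieAlgebra R α) :
    lift R f x ∈ K := by
  have : lift R f = K.incl.comp (lift R fun i => ⟨f i, hf i⟩) := by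
    ext i
    simp
  rw [this]
  exact SetLike.coe_mem _

theorem subset_twoSidedSpan {A : Type*} [Ring A] {s : Set A} : s ⊆ twoSidedSpan A s := by
  intro a ha
  have h1 : (1 : A) ∈ (⊤ : Submodule ℤ A) := Submodule.mem_top
  simpa [twoSidedSpan] using
    Submodule.mul_mem_mul (Submodule.mul_mem_mul h1 (Submodule.subset_span ha)) h1

theorem map_eq_zero_of_mem_twoSidedSpan {A B : Type*} [Ring A] [Ring B] (f : A →+* B)
    {s : Set A} (hs : ∀ a ∈ s, f a = 0) {u : A} (hu : u ∈ twoSidedSpan A s) : f u = 0 := by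
  have hspan : (Submodule.span ℤ s).map f.toIntAlgHom.toLinearMap = ⊥ := by
    rw [Submodule.map_span, Submodule.span_eq_bot]
    rintro _ ⟨a, ha, rfl⟩
    exact hs a ha
  have : (twoSidedSpan A s).map f.toIntAlgHom.toLinearMap = ⊥ := by
    rw [twoSidedSpan, Submodule.map_mul, Submodule.map_mul, hspan, Submodule.mul_bot,
      Submodule.bot_mul]
  exact (Submodule.mem_bot ℤ).mp (this ▸ Submodule.mem_map_of_mem hu)

namespace Polynomial
variable {A : Type*} [Semiring A]

theorem eval_one_mem_of_coeff_mem {S : Type*} [SetLike S A] [AddSubmonoidClass S A] {N : S}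
    {p : A[X]} (hp : ∀ d, p.coeff d ∈ N) : p.eval 1 ∈ N := by
  rw [eval_eq_sum, Polynomial.sum]
  exact sum_mem fun d _ => by simpa using hp d

theorem X_pow_add_dvd_mul {a b : ℕ} {p q : A[X]} (hp : X ^ a ∣ p) (hq : X ^ b ∣ q) :
    X ^ (a + b) ∣ p * q := by
  obtain ⟨p, rfl⟩ := hp
  obtain ⟨q, rfl⟩ := hq
  refine ⟨p * q, ?_⟩
  rw [pow_add, mul_assoc, ← mul_assoc p, ← (commute_X_pow p b).eq]
  simp only [mul_assoc]

end Polynomial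

namespace Submodule
variable {A : Type*} [Ring A]

/-- For a grading `γ` this says that `J` is spanned by homogeneous elements. -/
def IsHomogeneousFor (γ : A →+* A[X]) (J : Submodule ℤ A) : Prop :=
  ∀ u ∈ J, ∀ d, (γ u).coeff d ∈ J

variable {γ : A →+* A[X]}

theorem isHomogeneousFor_top : (⊤ : Submodule ℤ A).IsHomogeneousFor γ :=
  fun _ _ _ => mem_top

theorem IsHomogeneousFor.mul {J K : Submodule ℤ A} (hJ : J.IsHomogeneousFor γ)
    (hK : K.IsHomogeneousFor γ) : (J * K).IsHomogeneousFor γ := by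
  intro u hu d
  induction hu using Submodule.mul_induction_on' with
  | mem_mul_mem a ha b hb =>
    rw [map_mul, coeff_mul]
    exact sum_mem fun c _ => mul_mem_mul (hJ a ha c.1) (hK b hb c.2)
  | add u _ v _ hu hv => rw [map_add, coeff_add]; exact add_mem hu hv

theorem IsHomogeneousFor.twoSidedSpan {s : Set A} (h : (span ℤ s).IsHomogeneousFor γ) :
    (twoSidedSpan A s).IsHomogeneousFor γ :=
  (isHomogeneousFor_top.mul h).mul isHomogeneousFor_top

end Submodule

namespace UniversalEnvelopingAlgebra
variable (L : Type*) [LieRing L]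

local notation "U" => UniversalEnvelopingAlgebra ℤ L

/-- `ι` as a linear map for the `ℤ`-module structure of `U(L)` as an additive group, the one
that `aug L` and `twoSidedSpan` use. -/
noncomputable def ιLinear : L →ₗ[ℤ] U :=
  (ι ℤ : L →ₗ⁅ℤ⁆ U).toLinearMap

/-- `ι(γ_d(L))` for the lower central series indexed from `1`, and `0` in degree `0`. -/
noncomputable def lcsImage : ℕ → Submodule ℤ U
  | 0 => ⊥
  | d + 1 => (lowerCentralSeries ℤ L L d).toSubmodule.map (ιLinear L)

variable {L}

theorem ι_lie (x y : L) : ι ℤ ⁅x, y⁆ = ι ℤ x * ι ℤ y - ι ℤ y * ι ℤ x := by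
  rw [LieHom.map_lie, Ring.lie_def]

theorem commutator_mem_lcsImage {i j : ℕ} {a b : U} (ha : a ∈ lcsImage L i)
    (hb : b ∈ lcsImage L j) : a * b - b * a ∈ lcsImage L (i + j) := by
  match i, j, ha, hb with
  | 0, _, ha, _ => simp [(Submodule.mem_bot ℤ).mp ha]
  | _ + 1, 0, _, hb => simp [(Submodule.mem_bot ℤ).mp hb]
  | i + 1, j + 1, ⟨x, hx, hxa⟩, ⟨y, hy, hyb⟩ =>
    subst hxa hyb
    rw [show i + 1 + (j + 1) = i + j + 1 + 1 by omega]
    exact ⟨⁅x, y⁆, lie_lowerCentralSeries_le i j (LieSubmodule.lie_mem_lie hx hy),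
      ι_lie x y⟩

variable (L) in
noncomputable def lcsRees : LieSubalgebra ℤ U[X] where
  carrier := {p | ∀ d, p.coeff d ∈ lcsImage L d}
  add_mem' hp hq d := by rw [coeff_add]; exact add_mem (hp d) (hq d)
  zero_mem' d := by simp
  smul_mem' t p hp d := by rw [coeff_smul]; exact Submodule.smul_mem _ t (hp d)
  lie_mem' {p q} hp hq d := by
    rw [Ring.lie_def, coeff_sub, coeff_mul, coeff_mul,
      ← Finset.Nat.sum_antidiagonal_swap (f := fun c => q.coeff c.1 * p.coeff c.2),
      ← Finset.sum_sub_distrib]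
    refine sum_mem fun c hc => ?_
    rw [← Finset.HasAntidiagonal.mem_antidiagonal.mp hc]
    exact commutator_mem_lcsImage (hp c.1) (hq c.2)

/-- The coefficients of `γ u` are the homogeneous components of `u`, as for the grading of `U(F)`
by word length when `F` is free. -/
structure IsLcsGrading (γ : U →+* U[X]) : Prop where
  eval_one : ∀ u, (γ u).eval 1 = u
  coeff_mem : ∀ x d, (γ (ι ℤ x)).coeff d ∈ lcsImage L d

namespace IsLcsGrading
variable {γ : UniversalEnvelopingAlgebra ℤ L →+* (UniversalEnvelopingAlgebra ℤ L)[X]}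
  (hγ : IsLcsGrading γ)
include hγ

theorem coeff_mem_map_of_ne_one {N : Submodule ℤ L}
    (hN : (lowerCentralSeries ℤ L L 1).toSubmodule ≤ N) (x : L) {d : ℕ} (hd : d ≠ 1) :
    (γ (ι ℤ x)).coeff d ∈ N.map (ιLinear L) := by
  have hx := hγ.coeff_mem x d
  rcases d with _ | _ | d
  · exact (Submodule.mem_bot ℤ).mp hx ▸ zero_mem _
  · exact absurd rfl hd
  · exact Submodule.map_mono
      (fun y hy => hN (antitone_lowerCentralSeries ℤ L L (Nat.le_add_left 1 d) hy)) hx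

theorem isHomogeneousFor_map_ι {N : Submodule ℤ L}
    (hN : (lowerCentralSeries ℤ L L 1).toSubmodule ≤ N) :
    (N.map (ιLinear L)).IsHomogeneousFor γ := by
  rintro _ ⟨x, hx, rfl⟩ d
  set p := γ (ι ℤ x)
  have hne : ∀ d ≠ 1, p.coeff d ∈ N.map (ιLinear L) :=
    fun d hd => hγ.coeff_mem_map_of_ne_one hN x hd
  rcases eq_or_ne d 1 with rfl | hd
  · -- `ι x` is the sum of all coefficients of `p`, and all but the linear one lie in `ι(N)`.
    have herase : (p.erase 1).eval 1 ∈ N.map (ιLinear L) :=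
      eval_one_mem_of_coeff_mem fun d => by
        rw [coeff_erase]
        split_ifs with h
        · exact zero_mem _
        · exact hne d h
    have hsplit : p.coeff 1 = p.eval 1 - (p.erase 1).eval 1 := by
      have := congrArg (eval 1) (monomial_add_erase p 1)
      rw [eval_add, eval_monomial, one_pow, mul_one] at this
      exact eq_sub_of_add_eq this
    change p.coeff 1 ∈ _
    rw [hsplit, hγ.eval_one]
    exact sub_mem ⟨x, hx, rfl⟩ herase
  · exact hne d hd

theorem isHomogeneousFor_twoSidedSpan_image {N : Submodule ℤ L}
    (hN : (lowerCentralSeries ℤ L L 1).toSubmodule ≤ N) :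
    (twoSidedSpan U ((ι ℤ : L →ₗ⁅ℤ⁆ U) '' N)).IsHomogeneousFor γ := by
  refine Submodule.IsHomogeneousFor.twoSidedSpan ?_
  rw [show ((ι ℤ : L →ₗ⁅ℤ⁆ U) '' N) = ιLinear L '' N from rfl, Submodule.span_image,
    Submodule.span_eq]
  exact hγ.isHomogeneousFor_map_ι hN

theorem isHomogeneousFor_aug : (aug L).IsHomogeneousFor γ := by
  have := hγ.isHomogeneousFor_twoSidedSpan_image (N := ⊤) le_top
  rwa [Submodule.top_coe, Set.image_univ] at this

theorem X_dvd_of_mem_aug {u : U} (hu : u ∈ aug L) : X ∣ γ u := by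
  rw [X_dvd_iff, ← constantCoeff_apply]
  refine map_eq_zero_of_mem_twoSidedSpan (constantCoeff.comp γ) ?_ hu
  rintro _ ⟨x, rfl⟩
  exact (Submodule.mem_bot ℤ).mp (hγ.coeff_mem x 0)

theorem X_pow_dvd_of_mem_aug_pow {n : ℕ} {u : U} (hu : u ∈ aug L ^ n) : X ^ n ∣ γ u := by
  induction n generalizing u with
  | zero => rw [pow_zero]; exact one_dvd _
  | succ n ih =>
    rw [Submodule.pow_succ] at hu
    induction hu using Submodule.mul_induction_on' with
    | mem_mul_mem a ha b hb =>
      rw [map_mul]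
      exact X_pow_add_dvd_mul (ih ha) ((pow_one (X : U[X])).symm ▸ hγ.X_dvd_of_mem_aug hb)
    | add _ _ _ _ ha hb => rw [map_add]; exact dvd_add ha hb

theorem coeff_mem_of_mem_aug_pow_sup {J : Submodule ℤ U} (hJ : J.IsHomogeneousFor γ)
    {n d : ℕ} (hd : d < n) {u : U} (hu : u ∈ aug L ^ n ⊔ J) : (γ u).coeff d ∈ J := by
  obtain ⟨w, hw, v, hv, rfl⟩ := Submodule.mem_sup.mp hu
  rw [map_add, coeff_add, X_pow_dvd_iff.mp (hγ.X_pow_dvd_of_mem_aug_pow hw) d hd, zero_add]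
  exact hJ v hv d

theorem comap_aug_pow_sup {J : Submodule ℤ U} (hJ : J.IsHomogeneousFor γ) {n : ℕ}
    (hn : 1 ≤ n) :
    (aug L ^ n ⊔ J).comap (ιLinear L) =
      (lowerCentralSeries ℤ L L (n - 1)).toSubmodule ⊔ J.comap (ιLinear L) := by
  set K := (lowerCentralSeries ℤ L L (n - 1)).toSubmodule ⊔ J.comap (ιLinear L)
  refine le_antisymm (fun x hx => ?_)
    (sup_le (fun x hx => ?_) (Submodule.comap_mono le_sup_right))
  · -- Sort the homogeneous components of `ι x` into high degrees and low degrees (those in `J`).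
    suffices ιLinear L x ∈ K.map (ιLinear L) by
      rw [← Submodule.mem_comap, Submodule.comap_map_eq] at this
      have hker : LinearMap.ker (ιLinear L) ≤ K := (LinearMap.ker_le_comap _).trans le_sup_right
      exact sup_le le_rfl hker this
    rw [← hγ.eval_one (ιLinear L x)]
    refine eval_one_mem_of_coeff_mem fun d => ?_
    rcases d with _ | d
    · exact (Submodule.mem_bot ℤ).mp (hγ.coeff_mem x 0) ▸ zero_mem _
    obtain ⟨y, hy, hyx⟩ := hγ.coeff_mem x (d + 1)
    refine ⟨y, ?_, hyx⟩
    by_cases hd : d + 1 < n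
    · refine Submodule.mem_sup_right ?_
      rw [Submodule.mem_comap, hyx]
      exact hγ.coeff_mem_of_mem_aug_pow_sup hJ hd hx
    · exact Submodule.mem_sup_left (antitone_lowerCentralSeries ℤ L L (by omega) hy)
  · refine Submodule.mem_sup_left ?_
    have := map_lowerCentralSeries_le_pow (ι ℤ) (fun y => subset_twoSidedSpan ⟨y, rfl⟩) hx
      (P := aug L)
    rwa [Nat.sub_add_cancel hn] at this

end IsLcsGrading
end UniversalEnvelopingAlgebra

namespace FreeLieAlgebra
open UniversalEnvelopingAlgebra
variable (α : Type*)

local notation "U" => UniversalEnvelopingAlgebra ℤ (FreeLieAlgebra ℤ α)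

noncomputable def grade : U →ₐ[ℤ] U[X] :=
  UniversalEnvelopingAlgebra.lift ℤ (lift ℤ fun i => monomial 1 (ι ℤ (of ℤ i)))

variable {α}

theorem grade_ι (x : FreeLieAlgebra ℤ α) :
    grade α (ι ℤ x) = lift ℤ (fun i => monomial 1 (ι ℤ (of ℤ i))) x :=
  lift_ι_apply ℤ _ x

theorem grade_ι_of (i : α) : grade α (ι ℤ (of ℤ i)) = monomial 1 (ι ℤ (of ℤ i)) :=
  (grade_ι _).trans (lift_of_apply _ i)

theorem isLcsGrading_grade : IsLcsGrading (grade α : U →+* U[X]) where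
  eval_one u := by
    have : (eval₂AlgHom (AlgHom.id ℤ U) 1 fun a => Commute.one_right a).comp (grade α) =
        AlgHom.id ℤ U := by
      refine UniversalEnvelopingAlgebra.hom_ext ℤ (hom_ext fun i => ?_)
      change eval 1 (grade α (ι ℤ (of ℤ i))) = ι ℤ (of ℤ i)
      rw [grade_ι_of, eval_monomial, one_pow, mul_one]
    exact congr($this u)
  coeff_mem x d := by
    change (grade α (ι ℤ x)).coeff d ∈ _
    rw [grade_ι]
    refine lift_mem (K := lcsRees _) (fun i d => ?_) x d
    rw [coeff_monomial]
    split_ifs with h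
    · exact h ▸ ⟨of ℤ i, LieSubmodule.mem_top _, rfl⟩
    · exact zero_mem _

end FreeLieAlgebra

/-- Mathlib indexes the lower central series from `0`, so `γ_n(F)` is
`lowerCentralSeries ℤ F F (n - 1)`. -/
theorem comap_pow_sup_eq_gamma_sup_M_general (m : ℕ) (e : Fin m → ℕ)
    (n : ℕ) (hn : 1 ≤ n) :
    ((aug (FreeF m)) ^ n ⊔ aug (FreeF m) * sId m e).comap
        (ι ℤ : FreeF m →ₗ⁅ℤ⁆ _).toLinearMap
      = (lowerCentralSeries ℤ (FreeF m) (FreeF m) (n - 1)).toSubmodule ⊔ Msub m e := by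
  have hγ := FreeLieAlgebra.isLcsGrading_grade (α := Fin m)
  have hS : (lowerCentralSeries ℤ (FreeF m) (FreeF m) 1).toSubmodule ≤
      (Sideal m e).toSubmodule :=
    le_sup_left (a := derived m)
  exact hγ.comap_aug_pow_sup
    (hγ.isHomogeneousFor_aug.mul (hγ.isHomogeneousFor_twoSidedSpan_image hS)) hn

/-- For all `n ≥ 1`, the set `{x ∈ F : ι x ∈ ϖ(F)^n + ϖ(F)·𝔰}` equals `γ_n(F) + M`,
where `γ_n(F) = lowerCentralSeries ℤ F F (n-1)` is the `n`-th term of the lower central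
series of `F`. -/
theorem comap_pow_sup_eq_gamma_sup_M (m : ℕ) (e : Fin m → ℕ)
    (hdvd : ∀ i : Fin m, ∀ h : (i : ℕ) + 1 < m, e i ∣ e ⟨(i : ℕ) + 1, h⟩)
    (n : ℕ) (hn : 1 ≤ n) :
    ((aug (FreeF m)) ^ n ⊔ aug (FreeF m) * sId m e).comap
        (ι ℤ : FreeF m →ₗ⁅ℤ⁆ _).toLinearMap
      = (lowerCentralSeries ℤ (FreeF m) (FreeF m) (n - 1)).toSubmodule ⊔ Msub m e :=
  comap_pow_sup_eq_gamma_sup_M_general m e n hn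
end

section
/- Let F be the free Lie ring over ℤ on a set X, let R be a Lie ideal of F, and let 𝔯 be the two-sided ideal of U(F) generated by ι(R). Then 𝔯 = ϖ(F)·𝔯 + span_ℤ(ι(R)); that is, 𝔯 equals the sum of the product ideal ϖ(F)·𝔯 and the ℤ-submodule of U(F) spanned by the image of R under ι. -/
open UniversalEnvelopingAlgebra LieModule

attribute [local instance 100] LieRing.ofAssociativeRing

/-!
Since `R` is a Lie ideal, the relation `s * ι f = ι f * s - ι ⁅f, s⁆` for `s ∈ ι(R)` shows
that the left ideal `𝒰 · span(ι R)` is also a right ideal, so `𝔯 = 𝒰 · span(ι R)`.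
Writing `𝒰 = ϖ + ℤ·1` then gives `𝔯 = ϖ · span(ι R) + span(ι R)`.
-/

section TwoSidedSpan

variable {U : Type*} [Ring U] (s : Set U)

theorem span_le_twoSidedSpan : Submodule.span ℤ s ≤ twoSidedSpan U s := by
  intro x hx
  rw [twoSidedSpan]
  simpa using Submodule.mul_mem_mul (Submodule.mul_mem_mul (Submodule.mem_top (x := 1)) hx)
    (Submodule.mem_top (x := 1))

theorem top_mul_twoSidedSpan_le : ⊤ * twoSidedSpan U s ≤ twoSidedSpan U s := by
  rw [twoSidedSpan, ← mul_assoc, ← mul_assoc]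
  exact mul_le_mul_left (mul_le_mul_left le_top _) _

theorem twoSidedSpan_mul_top_le : twoSidedSpan U s * ⊤ ≤ twoSidedSpan U s := by
  rw [twoSidedSpan, mul_assoc]
  exact mul_le_mul_right le_top _

end TwoSidedSpan

namespace UniversalEnvelopingAlgebra

variable {K L : Type*} [CommRing K] [LieRing L] [LieAlgebra K L]

@[elab_as_elim]
theorem induction {C : UniversalEnvelopingAlgebra K L → Prop}
    (algebraMap : ∀ r : K, C (algebraMap K _ r))
    (ι : ∀ x : L, C (ι K x))
    (mul : ∀ a b, C a → C b → C (a * b))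
    (add : ∀ a b, C a → C b → C (a + b))
    (a : UniversalEnvelopingAlgebra K L) : C a := by
  obtain ⟨a, rfl⟩ : ∃ b, mkAlgHom K L b = a := Quotient.exists_rep a
  induction a using TensorAlgebra.induction with
  | algebraMap r => rw [AlgHom.commutes]; exact algebraMap r
  | ι x => exact ι x
  | mul a b ha hb => rw [map_mul]; exact mul _ _ ha hb
  | add a b ha hb => rw [map_add]; exact add _ _ ha hb

theorem ι_mul_ι (x y : L) :
    (ι K : L →ₗ⁅K⁆ UniversalEnvelopingAlgebra K L) x * ι K y
      = ι K y * ι K x + ι K ⁅x, y⁆ := by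
  rw [LieHom.map_lie, Ring.lie_def]
  abel

section LieIdeal

variable (R : LieIdeal K L)

local notation "𝒰" => UniversalEnvelopingAlgebra K L
local notation "S" => Submodule.span K ((ι K : L →ₗ⁅K⁆ 𝒰) '' (R : Set L))

theorem mul_ι_mem_top_mul_span_ι {s : 𝒰} (hs : s ∈ S) (f : L) :
    s * ι K f ∈ (⊤ : Submodule K 𝒰) * S := by
  have mem_top_mul {x : 𝒰} (hx : x ∈ S) : x ∈ (⊤ : Submodule K 𝒰) * S := by
    simpa using Submodule.mul_mem_mul (Submodule.mem_top (x := 1)) hx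
  induction hs using Submodule.span_induction with
  | mem x hx =>
    obtain ⟨r, hr, rfl⟩ := hx
    rw [ι_mul_ι, ← lie_skew, map_neg, ← sub_eq_add_neg]
    refine sub_mem (Submodule.mul_mem_mul trivial ?_) (mem_top_mul ?_)
    · exact Submodule.subset_span (Set.mem_image_of_mem _ hr)
    · exact Submodule.subset_span (Set.mem_image_of_mem _ (R.lie_mem hr))
  | zero => rw [zero_mul]; exact zero_mem _
  | add x y _ _ hx hy => rw [add_mul]; exact add_mem hx hy
  | smul c x _ hx => rw [smul_mul_assoc]; exact Submodule.smul_mem _ _ hx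

theorem top_mul_span_ι_mul_top_le :
    (⊤ : Submodule K 𝒰) * S * ⊤ ≤ ⊤ * S := by
  have top_mul_le : (⊤ : Submodule K 𝒰) * (⊤ * S) ≤ ⊤ * S := by
    rw [← mul_assoc]; exact mul_le_mul_left le_top _
  suffices ∀ u, ∀ x ∈ (⊤ : Submodule K 𝒰) * S, x * u ∈ ⊤ * S from
    Submodule.mul_le.mpr fun x hx u _ => this u x hx
  intro u
  induction u using induction with
  | algebraMap r =>
    intro x hx
    rw [Algebra.algebraMap_eq_smul_one, mul_smul_comm, mul_one]
    exact Submodule.smul_mem _ _ hx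
  | ι f =>
    intro x hx
    refine Submodule.mul_induction_on hx (fun t _ s hs => ?_)
      (fun _ _ => by rw [add_mul]; exact add_mem)
    rw [mul_assoc]
    exact top_mul_le (Submodule.mul_mem_mul trivial (mul_ι_mem_top_mul_span_ι R hs f))
  | mul a b ha hb => intro x hx; rw [← mul_assoc]; exact hb _ (ha x hx)
  | add a b ha hb => intro x hx; rw [mul_add]; exact add_mem (ha x hx) (hb x hx)

end LieIdeal

end UniversalEnvelopingAlgebra

theorem aug_sup_one_eq_top (L : Type*) [LieRing L] [LieAlgebra ℤ L] :
    aug L ⊔ 1 = ⊤ := by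
  have aug_mul_le : aug L * (aug L ⊔ 1) ≤ aug L :=
    (mul_le_mul_right le_top _).trans (twoSidedSpan_mul_top_le _)
  have mul_closed : (aug L ⊔ 1) * (aug L ⊔ 1) ≤ aug L ⊔ 1 := by
    rw [Submodule.sup_mul, Submodule.one_mul]
    exact sup_le (aug_mul_le.trans le_sup_left) le_rfl
  refine Submodule.eq_top_iff'.mpr fun u => ?_
  induction u using UniversalEnvelopingAlgebra.induction with
  | algebraMap r => exact Submodule.mem_sup_right (Submodule.algebraMap_mem r)
  | ι x =>
    exact Submodule.mem_sup_left (span_le_twoSidedSpan _ (Submodule.subset_span ⟨x, rfl⟩))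
  | mul a b ha hb => exact mul_closed (Submodule.mul_mem_mul ha hb)
  | add a b ha hb => exact add_mem ha hb

/-- Let `F` be the free Lie ring over ℤ on a set `X`, `R` a Lie ideal of `F`, and `𝔯` the
two-sided ideal of `𝒰(F)` generated by `ι(R)`.  Then `𝔯 = ϖ(F)·𝔯 + span_ℤ(ι(R))`. -/
theorem rId_eq_aug_mul_sup_span (X : Type*) (R : LieIdeal ℤ (FreeLieAlgebra ℤ X)) :
    twoSidedSpan _ ((ι ℤ : FreeLieAlgebra ℤ X →ₗ⁅ℤ⁆ _) '' (R : Set (FreeLieAlgebra ℤ X)))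
      = aug (FreeLieAlgebra ℤ X)
          * twoSidedSpan _ ((ι ℤ : FreeLieAlgebra ℤ X →ₗ⁅ℤ⁆ _) '' (R : Set (FreeLieAlgebra ℤ X)))
        ⊔ Submodule.span ℤ
            ((ι ℤ : FreeLieAlgebra ℤ X →ₗ⁅ℤ⁆ _) '' (R : Set (FreeLieAlgebra ℤ X))) := by
  set r := (ι ℤ : FreeLieAlgebra ℤ X →ₗ⁅ℤ⁆ _) '' (R : Set (FreeLieAlgebra ℤ X))
  have r_le : twoSidedSpan _ r ≤ ⊤ * Submodule.span ℤ r := top_mul_span_ι_mul_top_le R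
  refine le_antisymm ?_ (sup_le ((mul_le_mul_left le_top _).trans (top_mul_twoSidedSpan_le r))
    (span_le_twoSidedSpan r))
  calc twoSidedSpan _ r ≤ (aug _ ⊔ 1) * Submodule.span ℤ r := by rwa [aug_sup_one_eq_top]
    _ = aug _ * Submodule.span ℤ r ⊔ Submodule.span ℤ r := by
      rw [Submodule.sup_mul, Submodule.one_mul]
    _ ≤ _ := sup_le_sup_right (mul_le_mul_right (span_le_twoSidedSpan r) _) _
end
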